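/- arXiv:1110.6668 — 2 statements merged into one kernel-verified Lean document; each statement's English description precedes it below -/
import Mathlib

section
/- For any integer ℓ ≥ 2, if M is a simple matroid with no U_{2,ℓ+2}-minor, then the number of elements of M is at most (ℓ^{r(M)} - 1)/(ℓ - 1). -/
open Matroid Set

namespace GrowthRate

variable {α : Type*}

/-- The rank of a set in a matroid: the supremum of cardinalities of independent subsets. -/
noncomputable def eRk (M : Matroid α) (X : Set α) : ℕ∞ :=
  ⨆ I ∈ {I : Set α | M.Indep I ∧ I ⊆ X}, I.encard

/-- The rank of a matroid. -/
noncomputable def eRank (M : Matroid α) : ℕ∞ := eRk M M.E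

/-- Rank as a natural number (for finite matroids). -/
noncomputable def rk (M : Matroid α) (X : Set α) : ℕ := (eRk M X).toNat

/-- Rank of a matroid as a natural number. -/
noncomputable def rank (M : Matroid α) : ℕ := (eRank M).toNat

/-- Deletion of a set of elements. -/
noncomputable def delete (M : Matroid α) (D : Set α) : Matroid α := M ↾ (M.E \ D)

/-- Contraction of a set of elements, defined via duality. -/
noncomputable def contract (M : Matroid α) (C : Set α) : Matroid α := (delete M✶ C)✶

/-- `N` is a minor of `M` if it is obtained by a contraction followed by a deletion. -/
def IsMinor (N M : Matroid α) : Prop := ∃ C D : Set α, N = delete (contract M C) D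

/-- The number of points (rank-one flats) of `M` contained in `X`. -/
noncomputable def nPoints (M : Matroid α) (X : Set α) : ℕ :=
  {P : Set α | M.IsFlat P ∧ eRk M P = 1 ∧ P ⊆ X}.ncard

/-- `ε(M)`: the number of points (rank-one flats) of `M`. -/
noncomputable def eps (M : Matroid α) : ℕ := {P : Set α | M.IsFlat P ∧ eRk M P = 1}.ncard

/-- A matroid is simple if all singletons and pairs of ground elements are independent. -/
def Simple (M : Matroid α) : Prop :=
  ∀ e ∈ M.E, ∀ f ∈ M.E, M.Indep {e} ∧ (e ≠ f → M.Indep {e, f})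

/-- `M` has a `U_{2,m}`-minor: a minor that is simple of rank two with `m` elements. -/
def HasUnifLineMinor (M : Matroid α) (m : ℕ) : Prop :=
  ∃ N : Matroid α, IsMinor N M ∧ eRank N = 2 ∧ Simple N ∧ N.E.encard = m

/-- A matroid is weakly round if its ground set is not the union of a set of rank
at most `r(M)-2` and a set of rank at most `r(M)-1`. -/
def WeaklyRound (M : Matroid α) : Prop :=
  ¬ ∃ A B : Set α, A ∪ B = M.E ∧ eRk M A + 2 ≤ eRank M ∧ eRk M B + 1 ≤ eRank M

/-- `q` is a prime power. -/
def IsPrimePower (q : ℕ) : Prop := ∃ p n : ℕ, p.Prime ∧ 0 < n ∧ q = p ^ n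

/-- `M` is isomorphic to the projective geometry `PG(n-1, |F|)` over the finite field `F`:
there is a representation `f` of `M` by vectors in `F^n` such that distinct elements get
non-parallel vectors and every direction in `F^n` is represented. -/
def IsPG (M : Matroid α) (F : Type) [Field F] [Fintype F] (n : ℕ) : Prop :=
  ∃ f : α → (Fin n → F),
    (∀ I ⊆ M.E, (M.Indep I ↔ LinearIndependent F (fun x : I => f x))) ∧
    (∀ e ∈ M.E, ∀ e' ∈ M.E, ∀ c : F, f e' = c • f e → e = e') ∧
    (∀ v : Fin n → F, v ≠ 0 → ∃ e ∈ M.E, ∃ c : F, c ≠ 0 ∧ v = c • f e)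

/-- `M` is `(q,k)`-overfull. -/
noncomputable def Overfull (M : Matroid α) (q k : ℕ) : Prop :=
  ((q : ℚ) ^ (rank M + k) - 1) / ((q : ℚ) - 1)
      - (q : ℚ) * ((q : ℚ) ^ (2 * k) - 1) / ((q : ℚ) ^ 2 - 1) < (eps M : ℚ)

/-!
Contract a point `e`. The remaining points lie on the lines through `e`, and each such line
has at most `ℓ + 1` points, since a longer line would be a `U_{2,ℓ+2}`-restriction; choosing
one point on each line gives a simple minor of `M ／ {e}`, of rank at most `r(M) - 1`.
By induction, `|E(M)| ≤ 1 + ℓ (1 + ℓ + ⋯ + ℓ^(r(M)-2)) = 1 + ℓ + ⋯ + ℓ^(r(M)-1)`.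
-/

lemma eRk_eq_eRk (M : Matroid α) (X : Set α) : eRk M X = M.eRk X := by
  refine le_antisymm (iSup₂_le fun I hI => hI.1.encard_le_eRk_of_subset hI.2) ?_
  obtain ⟨I, hI⟩ := M.exists_isBasis' X
  rw [← hI.encard_eq_eRk]
  exact le_biSup _ ⟨hI.indep, hI.subset⟩

lemma eRank_eq_eRank (M : Matroid α) : eRank M = M.eRank := by
  rw [eRank, eRk_eq_eRk, eRk_ground]

lemma cast_rank (M : Matroid α) [M.RankFinite] : (rank M : ℕ∞) = M.eRank := by
  rw [rank, eRank_eq_eRank, ENat.natCast_toNat (M.eRank_ne_top_iff.2 inferInstance)]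

lemma restrict_isMinor {M : Matroid α} {R : Set α} (hR : R ⊆ M.E) : M ↾ R ≤m M := by
  simpa [delete_compl hR] using contract_delete_isMinor M ∅ (M.E \ R)

lemma contract_isMinor (M : Matroid α) (C : Set α) : M ／ C ≤m M := by
  simpa using contract_delete_isMinor M C ∅

lemma HasUnifLineMinor.of_isMinor {N M : Matroid α} {m : ℕ} (h : HasUnifLineMinor N m)
    (hNM : N ≤m M) : HasUnifLineMinor M m := by
  obtain ⟨N', hN'N, hrank, hsimple, hcard⟩ := h
  exact ⟨N', Matroid.IsMinor.trans hN'N hNM, hrank, hsimple, hcard⟩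

lemma simple_restrict_of_pairwise {M : Matroid α} {S : Set α} (h₁ : ∀ e ∈ S, M.Indep {e})
    (h₂ : S.Pairwise fun e f => M.Indep {e, f}) : Simple (M ↾ S) :=
  fun e he _ hf => ⟨restrict_indep_iff.2 ⟨h₁ e he, singleton_subset_iff.2 he⟩,
    fun hef => restrict_indep_iff.2 ⟨h₂ he hf hef, pair_subset he hf⟩⟩

lemma Simple.restrict {M : Matroid α} {R : Set α} (hM : Simple M) (hR : R ⊆ M.E) :
    Simple (M ↾ R) :=
  simple_restrict_of_pairwise (fun e he => (hM e (hR he) e (hR he)).1)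
    fun e he f hf hef => (hM e (hR he) f (hR hf)).2 hef

lemma _root_.Set.Finite.exists_maximal_pairwise_subset {r : α → α → Prop}
    (hr : ∀ a b, r a b → r b a) {T : Set α} (hT : T.Finite) : ∃ S ⊆ T, S.Pairwise r ∧ ∀ g ∈ T \ S, ∃ f ∈ S, ¬ r f g := by
  induction T, hT using Set.Finite.induction_on with
  | empty => exact ⟨∅, subset_rfl, pairwise_empty r, by simp⟩
  | @insert a T _ _ ih =>
    obtain ⟨S, hST, hS, hmax⟩ := ih
    by_cases ha : ∃ f ∈ S, ¬ r f a
    · refine ⟨S, hST.trans (subset_insert a T), hS, ?_⟩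
      rintro g ⟨rfl | hgT, hgS⟩
      · exact ha
      · exact hmax g ⟨hgT, hgS⟩
    · push Not at ha
      refine ⟨insert a S, insert_subset_insert hST,
        hS.insert fun b hb _ => ⟨hr b a (ha b hb), ha b hb⟩, ?_⟩
      rintro g ⟨rfl | hgT, hgS⟩
      · exact absurd (mem_insert g S) hgS
      · obtain ⟨f, hf, hfg⟩ := hmax g ⟨hgT, fun h => hgS (mem_insert_of_mem a h)⟩
        exact ⟨f, mem_insert_of_mem a hf, hfg⟩

lemma ncard_biUnion_le_mul {ι : Type*} {s : Set ι} (hs : s.Finite) {t : ι → Set α} {k : ℕ}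
    (ht : ∀ i ∈ s, (t i).ncard ≤ k) : (⋃ i ∈ s, t i).ncard ≤ k * s.ncard := by
  calc (⋃ i ∈ s, t i).ncard = (⋃ i ∈ hs.toFinset, t i).ncard := by simp
    _ ≤ ∑ i ∈ hs.toFinset, (t i).ncard := Finset.set_ncard_biUnion_le _ _
    _ ≤ hs.toFinset.card • k := Finset.sum_le_card_nsmul _ _ _ fun i hi => ht i (by simpa using hi)
    _ = k * s.ncard := by rw [ncard_eq_toFinset_card s hs, smul_eq_mul, mul_comm]

lemma eRank_contractElem_le {M : Matroid α} {e : α} {r : ℕ} (he : M.IsNonloop e)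
    (hr : M.eRank ≤ r + 1) : (M ／ {e}).eRank ≤ r := by
  rw [eRank_def, eRk_le_iff]
  intro I _ hI
  rw [he.contractElem_indep_iff] at hI
  have h := hI.2.encard_le_eRank.trans hr
  rwa [encard_insert_of_notMem hI.1, ENat.add_le_add_iff_right ENat.one_ne_top] at h

lemma mem_closure_pair_of_not_indep_contractElem {M : Matroid α} {e f g : α}
    (hef : M.Indep {e, f}) (hne : e ≠ f) (hg : g ∈ M.E) (h : ¬ (M ／ {e}).Indep {f, g}) :
    g ∈ M.closure {e, f} := by
  by_contra hgcl
  have hge : g ≠ e := fun hge => hgcl (M.mem_closure_of_mem' (by simp [hge]))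
  have hgf : g ≠ f := fun hgf => hgcl (M.mem_closure_of_mem' (by simp [hgf]))
  have hind : M.Indep (insert g {e, f}) :=
    (hef.insert_indep_iff_of_notMem (by simp [hge, hgf])).2 ⟨hg, hgcl⟩
  refine h ((indep_singleton.1 (hef.subset (by simp))).contractElem_indep_iff.2 ⟨?_, ?_⟩)
  · simp [hne, hge.symm]
  · rwa [pair_comm f g, insert_comm e g]

section Kung

variable {M : Matroid α} {ℓ : ℕ}

lemma Simple.ncard_le_of_eRk_le_two (hM : Simple M) (hminor : ¬ HasUnifLineMinor M (ℓ + 2))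
    {X : Set α} (hX : X ⊆ M.E) (hXr : M.eRk X ≤ 2) : X.ncard ≤ ℓ + 1 := by
  by_contra! hlt
  obtain ⟨Y, hYX, hY⟩ := exists_subset_card_eq (show ℓ + 2 ≤ X.ncard by omega)
  have hYfin : Y.Finite := finite_of_ncard_pos (by omega)
  obtain ⟨a, b, ha, hb, hab⟩ := (one_lt_ncard_iff hYfin).1 (by omega)
  refine hminor ⟨M ↾ Y, restrict_isMinor (hYX.trans hX), ?_, hM.restrict (hYX.trans hX), ?_⟩
  · have hpair := ((hM a (hX (hYX ha)) b (hX (hYX hb))).2 hab).encard_le_eRk_of_subset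
      (pair_subset ha hb)
    rw [encard_pair hab] at hpair
    rw [eRank_eq_eRank, eRank_restrict]
    exact le_antisymm ((M.eRk_mono hYX).trans hXr) hpair
  · show Y.encard = _
    rw [← hYfin.cast_ncard_eq, hY]

lemma Simple.ncard_closure_pair_diff_le (hM : Simple M) (hE : M.E.Finite)
    (hminor : ¬ HasUnifLineMinor M (ℓ + 2)) {e f : α} (he : e ∈ M.E) :
    (M.closure {e, f} \ {e}).ncard ≤ ℓ := by
  have hpair : M.eRk {e, f} ≤ 2 := calc
    M.eRk {e, f} ≤ M.eRk {f} + 1 := M.eRk_insert_le_add_one e {f}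
    _ ≤ 1 + 1 := by gcongr; exact M.eRk_singleton_le f
    _ = 2 := one_add_one_eq_two
  have hline := hM.ncard_le_of_eRk_le_two hminor (M.closure_subset_ground _)
    (by rwa [eRk_closure_eq])
  have := ncard_sdiff_singleton_add_one (M.mem_closure_of_mem' (mem_insert e {f}) he)
    (hE.subset (M.closure_subset_ground _))
  omega

lemma Simple.exists_simple_restrict_contractElem (hM : Simple M) (hE : M.E.Finite) {e : α}
    (he : e ∈ M.E) :
    ∃ S ⊆ M.E \ {e}, Simple (M ／ {e} ↾ S) ∧ M.E \ {e} ⊆ ⋃ f ∈ S, M.closure {e, f} \ {e} := by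
  have hnl : M.IsNonloop e := indep_singleton.1 (hM e he e he).1
  obtain ⟨S, hSE, hS, hmax⟩ := (hE.subset sdiff_subset).exists_maximal_pairwise_subset
    (r := fun f g => (M ／ {e}).Indep {f, g}) fun f g h => by simpa only [pair_comm] using h
  have hne : ∀ f ∈ S, e ≠ f := fun f hf h => (hSE hf).2 h.symm
  have hef : ∀ f ∈ S, M.Indep {e, f} := fun f hf => (hM e he f (hSE hf).1).2 (hne f hf)
  refine ⟨S, hSE, simple_restrict_of_pairwise
    (fun f hf => hnl.contractElem_indep_iff.2 ⟨hne f hf, hef f hf⟩) hS, fun g hg => ?_⟩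
  by_cases hgS : g ∈ S
  · exact mem_biUnion hgS ⟨M.mem_closure_of_mem' (by simp) hg.1, hg.2⟩
  · obtain ⟨f, hf, hfg⟩ := hmax g ⟨hg, hgS⟩
    exact mem_biUnion hf
      ⟨mem_closure_pair_of_not_indep_contractElem (hef f hf) (hne f hf) hg.1 hfg, hg.2⟩

theorem Simple.ncard_le_geom_sum (hM : Simple M) (hE : M.E.Finite)
    (hminor : ¬ HasUnifLineMinor M (ℓ + 2)) {r : ℕ} (hr : M.eRank ≤ r) :
    M.E.ncard ≤ ∑ i ∈ Finset.range r, ℓ ^ i := by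
  induction r generalizing M with
  | zero =>
    simp only [Finset.range_zero, Finset.sum_empty, nonpos_iff_eq_zero, ncard_eq_zero hE,
      eq_empty_iff_forall_notMem]
    intro e he
    have h := (hM e he e he).1.encard_le_eRank.trans hr
    simp at h
  | succ r ih =>
    obtain hE₀ | ⟨e, he⟩ := M.E.eq_empty_or_nonempty
    · simp [hE₀]
    obtain ⟨S, hSE, hSsimple, hcover⟩ := hM.exists_simple_restrict_contractElem hE he
    have hSfin : S.Finite := hE.subset (hSE.trans sdiff_subset)
    have hS_le : S.ncard ≤ ∑ i ∈ Finset.range r, ℓ ^ i :=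
      ih hSsimple hSfin
        (fun h => hminor (h.of_isMinor ((restrict_isMinor hSE).trans (contract_isMinor M {e}))))
        ((eRk_le_eRank _ _).trans
          (eRank_contractElem_le (indep_singleton.1 (hM e he e he).1) (by exact_mod_cast hr)))
    have hlines : (M.E \ {e}).ncard ≤ ℓ * S.ncard :=
      (ncard_le_ncard hcover (hSfin.biUnion fun f _ =>
          hE.subset (sdiff_subset.trans (M.closure_subset_ground _)))).trans
        (ncard_biUnion_le_mul hSfin fun f _ => hM.ncard_closure_pair_diff_le hE hminor he)
    calc M.E.ncard = (M.E \ {e}).ncard + 1 := (ncard_sdiff_singleton_add_one he hE).symm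
      _ ≤ ℓ * ∑ i ∈ Finset.range r, ℓ ^ i + 1 := by grw [hlines, hS_le]
      _ = ∑ i ∈ Finset.range (r + 1), ℓ ^ i := geom_sum_succ.symm

end Kung

/-- Kung's theorem: a simple matroid with no `U_{2,ℓ+2}`-minor has at most
`(ℓ^r - 1)/(ℓ-1)` elements, where `r` is its rank. -/
theorem statement_1 {α : Type*} (ℓ : ℕ) (hℓ : 2 ≤ ℓ) (M : Matroid α) [M.Finite]
    (hM : Simple M) (hminor : ¬ HasUnifLineMinor M (ℓ + 2)) :
    (M.E.ncard : ℚ) ≤ ((ℓ : ℚ) ^ rank M - 1) / ((ℓ : ℚ) - 1) := by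
  have hr : M.eRank ≤ rank M := (cast_rank M).ge
  have hℓ₁ : (ℓ : ℚ) ≠ 1 := by exact_mod_cast (show ℓ ≠ 1 by omega)
  rw [← geom_sum_eq hℓ₁]
  exact_mod_cast hM.ncard_le_geom_sum M.ground_finite hminor hr

end GrowthRate
end

section
/- Let q be a prime power, k ≥ 0, and M a matroid. If ε(M/e) ≤ (q^{r(M)+k-1} - 1)/(q-1) - q·(q^{2k}-1)/(q²-1) for some nonloop e, every line of M through e has at most q² + 1 points, and at most (q^{2k}-1)/(q²-1) lines through e have more than q + 1 points, then ε(M) ≤ (q^{r(M)+k} - 1)/(q-1) + q·(q^{2k}-1)/(q²-1). -/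
open Matroid Set

/-! Every point of `M` other than `cl{e}` spans a line through `e` together with `e`, so
`ε(M) ≤ 1 + Σ_L (ε(L) - 1)` over the lines `L` through `e`. A line with at most `q + 1` points
contributes at most `q`, a longer one at most `q²`, and `L ↦ L \ {e}` injects the lines through `e`
into the points of `M / e`. Hence `ε(M) ≤ 1 + q ε(M/e) + (q² - q) · #(long lines)`, and the
hypotheses finish the bound because `1 + q (q^(n-1) - 1)/(q - 1) = (q^n - 1)/(q - 1)`. -/

namespace Matroid

variable {α : Type*} {M : Matroid α} {L P : Set α} {e : α}

lemma finite_setOf_isFlat [M.Finite] (p : Set α → Prop) : {F | M.IsFlat F ∧ p F}.Finite :=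
  M.ground_finite.finite_subsets.subset fun _ hF ↦ hF.1.subset_ground

lemma IsNonloop.eRk_contractElem_add_one (he : M.IsNonloop e) (X : Set α) :
    (M ／ {e}).eRk X + 1 = M.eRk (insert e X) := by
  obtain ⟨I, hI, heI⟩ :=
    he.indep.subset_isBasis'_of_subset (singleton_subset_iff.2 (mem_insert e X))
  rw [← eRk_insert_of_notMem_ground X (by simp : e ∉ (M ／ {e}).E),
    (hI.contract_isBasis'_sdiff_of_subset heI).eRk_eq_encard, hI.eRk_eq_encard,
    encard_sdiff_singleton_add_one (heI rfl)]

lemma IsNonloop.eq_closure_of_isFlat (he : M.IsNonloop e) (hP : M.IsFlat P) (hr : M.eRk P = 1)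
    (heP : e ∈ P) : P = M.closure {e} := by
  obtain ⟨f, hfP, -, hPf⟩ := (eRk_eq_one_iff hP.subset_ground).1 hr
  rw [he.closure_eq_of_mem_closure (hPf heP)]
  exact hPf.antisymm
    ((M.closure_subset_closure (singleton_subset_iff.2 hfP)).trans hP.closure.subset)

lemma IsNonloop.eRk_closure_insert_eq_two (he : M.IsNonloop e) (hP : M.IsFlat P)
    (hr : M.eRk P = 1) (heP : e ∉ P) : M.eRk (M.closure (insert e P)) = 2 := by
  rw [eRk_closure_eq, eRk_insert_eq_add_one ⟨he.mem_ground, by rwa [hP.closure]⟩, hr]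
  rfl

lemma IsFlat.contractElem_sdiff (hL : M.IsFlat L) (heL : e ∈ L) :
    (M ／ {e}).IsFlat (L \ {e}) := by
  rw [isFlat_iff_closure_eq, contract_closure_eq,
    sdiff_union_of_subset (singleton_subset_iff.2 heL), hL.closure]

lemma IsNonloop.eRk_contractElem_sdiff (he : M.IsNonloop e) (hL : M.eRk L = 2) (heL : e ∈ L) :
    (M ／ {e}).eRk (L \ {e}) = 1 := by
  have h := he.eRk_contractElem_add_one (L \ {e})
  rw [insert_sdiff_singleton, insert_eq_of_mem heL, hL] at h
  exact ENat.add_left_injective_of_ne_top ENat.one_ne_top (h.trans one_add_one_eq_two.symm)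

end Matroid

namespace Finset

lemma sum_sub_one_le_of_le_sq_add_one {ι : Type*} {s : Finset ι} {n : ι → ℕ} {q : ℕ}
    (hn : ∀ i ∈ s, n i ≤ q ^ 2 + 1) :
    ∑ i ∈ s, (n i - 1) ≤ q * s.card + (q ^ 2 - q) * (s.filter (q + 1 < n ·)).card := by
  calc ∑ i ∈ s, (n i - 1)
      _ ≤ ∑ i ∈ s, (q + if q + 1 < n i then q ^ 2 - q else 0) :=
        sum_le_sum fun i hi ↦ by have := hn i hi; split_ifs <;> omega
      _ = q * s.card + (q ^ 2 - q) * (s.filter (q + 1 < n ·)).card := by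
        rw [sum_add_distrib, sum_const, ← sum_filter, sum_const,
          smul_eq_mul, smul_eq_mul, mul_comm, mul_comm (card _)]

end Finset

namespace GrowthRate

variable {α : Type*} {M : Matroid α} {L : Set α} {e : α}

lemma eRk_eq_matroid_eRk : eRk M = M.eRk := by
  funext X
  obtain ⟨I, hI⟩ := M.exists_isBasis' X
  refine le_antisymm (iSup₂_le fun J hJ ↦ hJ.1.encard_le_eRk_of_subset hJ.2) ?_
  rw [← hI.encard_eq_eRk]
  exact le_iSup₂ (f := fun J (_ : J ∈ {J | M.Indep J ∧ J ⊆ X}) ↦ J.encard) I ⟨hI.indep, hI.subset⟩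

lemma contract_eq_matroid_contract (M : Matroid α) (C : Set α) : contract M C = M ／ C := rfl

lemma one_le_rank [M.Finite] (he : M.IsNonloop e) : 1 ≤ rank M := by
  have h1 : 1 ≤ M.eRank := by simpa using he.indep.encard_le_eRank
  rw [rank, eRank, eRk_eq_matroid_eRk, eRk_ground]
  exact ENat.toNat_le_toNat h1 ((eRank_ne_top_iff M).2 inferInstance)

lemma IsPrimePower.two_le {q : ℕ} (hq : IsPrimePower q) : 2 ≤ q := by
  obtain ⟨p, n, hp, hn, rfl⟩ := hq
  exact hp.two_le.trans (Nat.le_self_pow hn.ne' p)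

lemma card_le_nPoints_sub_one [M.Finite] (he : M.IsNonloop e) (hL : M.IsFlat L) (heL : e ∈ L)
    {Ps : Finset (Set α)}
    (hPs : ∀ P ∈ Ps, M.IsFlat P ∧ M.eRk P = 1 ∧ P ⊆ L ∧ P ≠ M.closure {e}) :
    Ps.card ≤ nPoints M L - 1 := by
  have hP₀ : M.closure {e} ∈ {P | M.IsFlat P ∧ M.eRk P = 1 ∧ P ⊆ L} :=
    ⟨isFlat_closure _, by simp [he.eRk_eq],
      (M.closure_subset_closure (singleton_subset_iff.2 heL)).trans hL.closure.subset⟩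
  have hsub : (Ps : Set (Set α)) ⊆ {P | M.IsFlat P ∧ M.eRk P = 1 ∧ P ⊆ L} \ {M.closure {e}} :=
    fun P hP ↦ let ⟨hPf, hPr, hPL, hPe⟩ := hPs P hP; ⟨⟨hPf, hPr, hPL⟩, hPe⟩
  calc Ps.card
      _ = (Ps : Set (Set α)).ncard := (ncard_coe_finset _).symm
      _ ≤ ({P | M.IsFlat P ∧ M.eRk P = 1 ∧ P ⊆ L} \ {M.closure {e}}).ncard :=
        ncard_le_ncard hsub (M.finite_setOf_isFlat _).sdiff
      _ = nPoints M L - 1 := by rw [ncard_sdiff_singleton_of_mem hP₀, nPoints, eRk_eq_matroid_eRk]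

open scoped Finset in
lemma eps_le_one_add_sum_nPoints [M.Finite] (he : M.IsNonloop e) {Ls : Finset (Set α)}
    (hLs : ∀ L, L ∈ Ls ↔ M.IsFlat L ∧ M.eRk L = 2 ∧ e ∈ L) :
    eps M ≤ 1 + ∑ L ∈ Ls, (nPoints M L - 1) := by
  classical
  have hfin := M.finite_setOf_isFlat (M.eRk · = 1)
  set Ps := hfin.toFinset
  set P₀ := M.closure {e}
  have hP₀ : P₀ ∈ Ps := by simp [Ps, P₀, he.eRk_eq]
  have hmem : ∀ P ∈ Ps.erase P₀, M.IsFlat P ∧ M.eRk P = 1 ∧ P ≠ P₀ ∧ e ∉ P := by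
    intro P hP
    obtain ⟨hPP₀, hPf, hPr⟩ : P ≠ P₀ ∧ M.IsFlat P ∧ M.eRk P = 1 := by simpa [Ps] using hP
    exact ⟨hPf, hPr, hPP₀, fun heP ↦ hPP₀ (he.eq_closure_of_isFlat hPf hPr heP)⟩
  have hmaps : ((Ps.erase P₀ : Finset _) : Set (Set α)).MapsTo
      (fun P ↦ M.closure (insert e P)) Ls := by
    intro P hP
    obtain ⟨hPf, hPr, -, heP⟩ := hmem P hP
    exact (hLs _).2 ⟨isFlat_closure _, he.eRk_closure_insert_eq_two hPf hPr heP,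
      M.mem_closure_of_mem' (mem_insert e P) he.mem_ground⟩
  calc eps M = 1 + #(Ps.erase P₀) := by
        rw [eps, eRk_eq_matroid_eRk, ncard_eq_toFinset_card _ hfin,
          ← Finset.card_erase_add_one hP₀, add_comm]
    _ = 1 + ∑ L ∈ Ls, #{P ∈ Ps.erase P₀ | M.closure (insert e P) = L} := by
        rw [Finset.card_eq_sum_card_fiberwise hmaps]
    _ ≤ 1 + ∑ L ∈ Ls, (nPoints M L - 1) := by
        gcongr with L hL
        obtain ⟨hLf, -, heL⟩ := (hLs L).1 hL
        refine card_le_nPoints_sub_one he hLf heL fun P hP ↦ ?_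
        obtain ⟨hPe, rfl⟩ := Finset.mem_filter.1 hP
        obtain ⟨hPf, hPr, hPP₀, -⟩ := hmem P hPe
        exact ⟨hPf, hPr, M.subset_closure_of_subset' (subset_insert e P), hPP₀⟩

lemma card_le_eps_contract [M.Finite] (he : M.IsNonloop e) {Ls : Finset (Set α)}
    (hLs : ∀ L ∈ Ls, M.IsFlat L ∧ M.eRk L = 2 ∧ e ∈ L) :
    Ls.card ≤ eps (contract M {e}) := by
  rw [← ncard_coe_finset, eps, eRk_eq_matroid_eRk, contract_eq_matroid_contract]
  refine ncard_le_ncard_of_injOn (· \ {e}) (fun L hL ↦ ?_) (fun L₁ hL₁ L₂ hL₂ h ↦ ?_)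
    ((M ／ {e}).finite_setOf_isFlat _)
  · obtain ⟨hLf, hLr, heL⟩ := hLs L hL
    exact ⟨hLf.contractElem_sdiff heL, he.eRk_contractElem_sdiff hLr heL⟩
  · rw [← insert_eq_of_mem (hLs L₁ hL₁).2.2, ← insert_eq_of_mem (hLs L₂ hL₂).2.2,
      ← insert_sdiff_singleton, ← insert_sdiff_singleton (s := L₂)]
    exact congrArg (insert e) h

lemma eps_le_of_nPoints_le [M.Finite] (he : M.IsNonloop e) {q : ℕ}
    (hL : ∀ L, M.IsFlat L → M.eRk L = 2 → e ∈ L → nPoints M L ≤ q ^ 2 + 1) :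
    eps M ≤ 1 + q * eps (contract M {e}) + (q ^ 2 - q) *
      {L | M.IsFlat L ∧ M.eRk L = 2 ∧ e ∈ L ∧ q + 1 < nPoints M L}.ncard := by
  classical
  have hfin := M.finite_setOf_isFlat (fun L ↦ M.eRk L = 2 ∧ e ∈ L)
  set Ls := hfin.toFinset
  have hLs : ∀ L, L ∈ Ls ↔ M.IsFlat L ∧ M.eRk L = 2 ∧ e ∈ L := fun L ↦ hfin.mem_toFinset
  have hbig : {L | M.IsFlat L ∧ M.eRk L = 2 ∧ e ∈ L ∧ q + 1 < nPoints M L} =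
      ↑(Ls.filter (q + 1 < nPoints M ·)) := by
    ext L
    simp [hLs, and_assoc]
  calc eps M
      _ ≤ 1 + ∑ L ∈ Ls, (nPoints M L - 1) := eps_le_one_add_sum_nPoints he hLs
      _ ≤ 1 + (q * Ls.card + (q ^ 2 - q) * (Ls.filter (q + 1 < nPoints M ·)).card) := by
        gcongr
        refine Finset.sum_sub_one_le_of_le_sq_add_one fun L hL' ↦ ?_
        obtain ⟨hLf, hLr, heL⟩ := (hLs L).1 hL'
        exact hL L hLf hLr heL
      _ ≤ 1 + q * eps (contract M {e}) + (q ^ 2 - q) *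
          {L | M.IsFlat L ∧ M.eRk L = 2 ∧ e ∈ L ∧ q + 1 < nPoints M L}.ncard := by
        rw [hbig, ncard_coe_finset, ← add_assoc]
        gcongr
        exact card_le_eps_contract he fun L ↦ (hLs L).1

lemma mul_geom_quotient_add_one {q : ℚ} (hq : q ≠ 1) (n : ℕ) :
    q * ((q ^ n - 1) / (q - 1)) + 1 = (q ^ (n + 1) - 1) / (q - 1) := by
  field_simp [sub_ne_zero.2 hq]
  ring

theorem statement_7_general {α : Type*} (q k : ℕ) (hq : IsPrimePower q)
    (M : Matroid α) [M.Finite] (e : α) (hel : M.Indep {e})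
    (h1 : (eps (contract M {e}) : ℚ) ≤
      ((q : ℚ) ^ (rank M + k - 1) - 1) / ((q : ℚ) - 1)
        - (q : ℚ) * ((q : ℚ) ^ (2 * k) - 1) / ((q : ℚ) ^ 2 - 1))
    (h2 : ∀ L : Set α, M.IsFlat L → eRk M L = 2 → e ∈ L → nPoints M L ≤ q ^ 2 + 1)
    (h3 : (({L : Set α | M.IsFlat L ∧ eRk M L = 2 ∧ e ∈ L ∧ q + 1 < nPoints M L}).ncard : ℚ)
        ≤ ((q : ℚ) ^ (2 * k) - 1) / ((q : ℚ) ^ 2 - 1)) :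
    (eps M : ℚ) ≤ ((q : ℚ) ^ (rank M + k) - 1) / ((q : ℚ) - 1)
        + (q : ℚ) * ((q : ℚ) ^ (2 * k) - 1) / ((q : ℚ) ^ 2 - 1) := by
  have he' : M.IsNonloop e := indep_singleton.1 hel
  have hq2 : (2 : ℚ) ≤ q := by exact_mod_cast hq.two_le
  rw [eRk_eq_matroid_eRk] at h2 h3
  have hcount : (eps M : ℚ) ≤ 1 + q * eps (contract M {e}) + ((q : ℚ) ^ 2 - q) *
      {L | M.IsFlat L ∧ M.eRk L = 2 ∧ e ∈ L ∧ q + 1 < nPoints M L}.ncard := by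
    have h := (Nat.cast_le (α := ℚ)).2 (eps_le_of_nPoints_le he' h2)
    push_cast [Nat.cast_sub (Nat.le_self_pow two_ne_zero q)] at h
    exact h
  set A : ℚ := ((q : ℚ) ^ (2 * k) - 1) / ((q : ℚ) ^ 2 - 1)
  have hA : 0 ≤ A :=
    div_nonneg (by linarith [one_le_pow₀ (n := 2 * k) (by linarith : (1 : ℚ) ≤ q)]) (by nlinarith)
  have hgeom := mul_geom_quotient_add_one (q := (q : ℚ)) (by linarith) (rank M + k - 1)
  rw [Nat.sub_add_cancel (by linarith [one_le_rank he'])] at hgeom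
  rw [mul_div_assoc] at h1 ⊢
  have hE := mul_le_mul_of_nonneg_left h1 (by linarith : (0 : ℚ) ≤ q)
  have hB := mul_le_mul_of_nonneg_left h3 (by nlinarith : (0 : ℚ) ≤ q ^ 2 - q)
  linarith [mul_nonneg (by linarith : (0 : ℚ) ≤ q) hA]

/-- The counting calculation of Lemma `criticallines`: if `ε(M/e)` is small, every
line through `e` has at most `q²+1` points, and at most `(q^(2k)-1)/(q²-1)` lines
through `e` have more than `q+1` points, then `ε(M)` is suitably bounded. -/
theorem statement_7 {α : Type*} (q k : ℕ) (hq : IsPrimePower q)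
    (M : Matroid α) [M.Finite] (e : α) (he : e ∈ M.E) (hel : M.Indep {e})
    (h1 : (eps (contract M {e}) : ℚ) ≤
      ((q : ℚ) ^ (rank M + k - 1) - 1) / ((q : ℚ) - 1)
        - (q : ℚ) * ((q : ℚ) ^ (2 * k) - 1) / ((q : ℚ) ^ 2 - 1))
    (h2 : ∀ L : Set α, M.IsFlat L → eRk M L = 2 → e ∈ L → nPoints M L ≤ q ^ 2 + 1)
    (h3 : (({L : Set α | M.IsFlat L ∧ eRk M L = 2 ∧ e ∈ L ∧ q + 1 < nPoints M L}).ncard : ℚ)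
        ≤ ((q : ℚ) ^ (2 * k) - 1) / ((q : ℚ) ^ 2 - 1)) :
    (eps M : ℚ) ≤ ((q : ℚ) ^ (rank M + k) - 1) / ((q : ℚ) - 1)
        + (q : ℚ) * ((q : ℚ) ^ (2 * k) - 1) / ((q : ℚ) ^ 2 - 1) :=
  statement_7_general q k hq M e hel h1 h2 h3

end GrowthRate
end
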